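/- Let p ≥ 1 be a natural number and u = 2^{−(p+1)}. For t ∈ [−1,1] with t ≠ 0, and for a floating point number z(e,s,k) = (−1)^s · 2^e · (1 + k/2^p) with 0 ≤ k ≤ 2^p − 1 (not at the exponent boundaries), the condition 2^e(1 + (2k−1)/2^{p+1}) ≤ z(e,0,k)/(1−tu) ≤ 2^e(1 + (2k+1)/2^{p+1}) holds if and only if −2^{p+1}/(2^{p+1} + 2k − 1) ≤ t ≤ 2^{p+1}/(2^{p+1} + 2k + 1). -/

import Mathlib

/-!
With mantissa `m = 1 + k / 2^p` and half-ulp `h = u`, the bounds are `2^e (m ∓ h)`. As `1 - t h > 0`,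
clearing the denominator turns `m - h ≤ m / (1 - t h)` into `0 ≤ h (1 + t (m - h))` and
`m / (1 - t h) ≤ m + h` into `0 ≤ h (1 - t (m + h))`, i.e. `-(m - h)⁻¹ ≤ t ≤ (m + h)⁻¹`;
finally `(m ∓ h)⁻¹ = 2^(p+1) / (2^(p+1) + 2k ∓ 1)`.
-/

section RoundingInterval

variable {K : Type*} [Field K] [LinearOrder K] [IsStrictOrderedRing K] {m h t : K}

theorem sub_le_div_one_sub_mul_iff (hh : 0 < h) (hmh : 0 < m - h) (ht : 0 < 1 - t * h) :
    m - h ≤ m / (1 - t * h) ↔ -(m - h)⁻¹ ≤ t := by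
  have key : m - (m - h) * (1 - t * h) = h * (1 - -t * (m - h)) := by ring
  rw [le_div_iff₀ ht, neg_le, inv_eq_one_div, le_div_iff₀ hmh, ← sub_nonneg, key,
    mul_nonneg_iff_of_pos_left hh, sub_nonneg]

theorem div_one_sub_mul_le_add_iff (hh : 0 < h) (hmh : 0 < m + h) (ht : 0 < 1 - t * h) :
    m / (1 - t * h) ≤ m + h ↔ t ≤ (m + h)⁻¹ := by
  have key : (m + h) * (1 - t * h) - m = h * (1 - t * (m + h)) := by ring
  rw [div_le_iff₀ ht, inv_eq_one_div, le_div_iff₀ hmh, ← sub_nonneg, key,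
    mul_nonneg_iff_of_pos_left hh, sub_nonneg]

theorem mul_sub_le_mul_div_one_sub_mul_le_mul_add_iff {a : K} (ha : 0 < a) (hh : 0 < h)
    (hmh : 0 < m - h) (ht : 0 < 1 - t * h) :
    (a * (m - h) ≤ a * m / (1 - t * h) ∧ a * m / (1 - t * h) ≤ a * (m + h)) ↔
      (-(m - h)⁻¹ ≤ t ∧ t ≤ (m + h)⁻¹) := by
  rw [mul_div_assoc, mul_le_mul_iff_right₀ ha, mul_le_mul_iff_right₀ ha,
    sub_le_div_one_sub_mul_iff hh hmh ht, div_one_sub_mul_le_add_iff hh (by linarith) ht]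

end RoundingInterval

theorem rounding_interval_iff_general (p : ℕ) (u t : ℝ)
    (hu : u = 1 / 2^(p+1)) (ht2 : t ≤ 1)
    (e : ℤ) (k : ℕ)
    (z : ℝ) (hz : z = (2:ℝ)^e * (1 + (k : ℝ) / 2^p)) :
    ((2:ℝ)^e * (1 + (2*(k:ℝ) - 1) / 2^(p+1)) ≤ z / (1 - t*u) ∧
      z / (1 - t*u) ≤ (2:ℝ)^e * (1 + (2*(k:ℝ) + 1) / 2^(p+1))) ↔
    (-(2^(p+1) / (2^(p+1) + 2*(k:ℝ) - 1)) ≤ t ∧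
      t ≤ 2^(p+1) / (2^(p+1) + 2*(k:ℝ) + 1)) := by
  set m : ℝ := 1 + k / 2^p
  have hu_pos : 0 < u := by rw [hu]; positivity
  have hu_lt_one : u < 1 := by
    rw [hu, div_lt_one (by positivity)]
    exact one_lt_pow₀ one_lt_two p.succ_ne_zero
  have h_lower : 1 + (2*(k:ℝ) - 1) / 2^(p+1) = m - u := by rw [hu, pow_succ]; ring
  have h_upper : 1 + (2*(k:ℝ) + 1) / 2^(p+1) = m + u := by rw [hu, pow_succ]; ring
  have hmu : 0 < m - u := by
    have : (0:ℝ) ≤ k / 2^p := by positivity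
    show 0 < 1 + (k:ℝ) / 2^p - u
    linarith
  have hdenom : 0 < 1 - t * u := by linarith [mul_le_of_le_one_left hu_pos.le ht2]
  have h_inv_lower : (m - u)⁻¹ = 2^(p+1) / (2^(p+1) + 2*(k:ℝ) - 1) := by
    rw [← h_lower, one_add_div (by positivity), inv_div, add_sub_assoc]
  have h_inv_upper : (m + u)⁻¹ = 2^(p+1) / (2^(p+1) + 2*(k:ℝ) + 1) := by
    rw [← h_upper, one_add_div (by positivity), inv_div, add_assoc]
  rw [hz, h_lower, h_upper, ← h_inv_lower, ← h_inv_upper]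
  exact mul_sub_le_mul_div_one_sub_mul_le_mul_add_iff (by positivity) hu_pos hmu hdenom

theorem rounding_interval_iff (p : ℕ) (hp : 1 ≤ p) (u t : ℝ)
    (hu : u = 1 / 2^(p+1)) (ht1 : -1 ≤ t) (ht2 : t ≤ 1) (ht0 : t ≠ 0)
    (e : ℤ) (k : ℕ) (hk1 : 1 ≤ k) (hk2 : k ≤ 2^p - 1)
    (z : ℝ) (hz : z = (2:ℝ)^e * (1 + (k : ℝ) / 2^p)) :
    ((2:ℝ)^e * (1 + (2*(k:ℝ) - 1) / 2^(p+1)) ≤ z / (1 - t*u) ∧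
      z / (1 - t*u) ≤ (2:ℝ)^e * (1 + (2*(k:ℝ) + 1) / 2^(p+1))) ↔
    (-(2^(p+1) / (2^(p+1) + 2*(k:ℝ) - 1)) ≤ t ∧
      t ≤ 2^(p+1) / (2^(p+1) + 2*(k:ℝ) + 1)) :=
  rounding_interval_iff_general p u t hu ht2 e k z hz
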